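/- arXiv:1310.4764 — 3 statements merged into one kernel-verified Lean document; each statement's English description precedes it below -/
import Mathlib

section
/- Let x, y ∈ G_0 = L_0·Z^d be nearest neighbors in G_0 (i.e. |x−y|₁ = L_0) and suppose the configuration ω is such that both x and y are 0-good (i.e. both A^u_x ∩ B^u_x and A^u_y ∩ B^u_y occur). Then: (a) for each z ∈ {x,y}, the graph S_{L_0} ∩ (z+[0,L_0)^d) contains a unique connected component C_z with at least (3/4)η(u)L_0^d vertices; (b) C_x and C_y are connected in the graph S ∩ ((x+[0,2L_0)^d) ∪ (y+[0,2L_0)^d)). -/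
open MeasureTheory Filter
open scoped ENNReal

namespace Perco

/-- A point of the lattice `ℤ^d`. -/
abbrev Pt (d : ℕ) := Fin d → ℤ

/-- A percolation configuration on `ℤ^d`. -/
abbrev Config (d : ℕ) := Pt d → Bool

variable {d : ℕ}

/-- The `ℓ¹`-distance on `ℤ^d`. -/
def dist1 (x y : Pt d) : ℕ := ∑ i, (x i - y i).natAbs

/-- The `ℓ^∞`-distance on `ℤ^d`. -/
def distInf (x y : Pt d) : ℕ := Finset.univ.sup fun i => (x i - y i).natAbs

/-- The closed `ℓ^∞`-ball of radius `R` around `x`. -/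
def ballZ (x : Pt d) (R : ℕ) : Set (Pt d) := {y | distInf x y ≤ R}

/-- Nearest-neighbour adjacency in `ℤ^d`. -/
def adj (x y : Pt d) : Prop := dist1 x y = 1

/-- The occupied set of a configuration. -/
def SS (ω : Config d) : Set (Pt d) := {x | ω x = true}

/-- One step of a nearest-neighbour path staying inside `T`. -/
def stepRel (T : Set (Pt d)) (x y : Pt d) : Prop := adj x y ∧ x ∈ T ∧ y ∈ T

/-- `x` and `y` are connected by a nearest-neighbour path inside `T`. -/
def connIn (T : Set (Pt d)) (x y : Pt d) : Prop :=
  x ∈ T ∧ y ∈ T ∧ Relation.ReflTransGen (stepRel T) x y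

/-- The connected component (cluster) of `x` in `T`. -/
def cluster (T : Set (Pt d)) (x : Pt d) : Set (Pt d) := {y | connIn T x y}

/-- `S_r`: vertices of `S(ω)` in connected components of `ℓ¹`-diameter at least `r`. -/
def Sr (ω : Config d) (r : ℝ) : Set (Pt d) :=
  {x | x ∈ SS ω ∧ ∃ y ∈ cluster (SS ω) x, ∃ z ∈ cluster (SS ω) x, r ≤ (dist1 y z : ℝ)}

/-- `S_∞`: vertices of `S(ω)` in infinite connected components. -/
def Sinf (ω : Config d) : Set (Pt d) := {x | x ∈ SS ω ∧ (cluster (SS ω) x).Infinite}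

/-- The shift of a configuration by `x`. -/
def shift (x : Pt d) (ω : Config d) : Config d := fun y => ω (x + y)

/-- An increasing event. -/
def IncreasingEvent (G : Set (Config d)) : Prop :=
  ∀ ω ω' : Config d, (∀ x, ω x = true → ω' x = true) → ω ∈ G → ω' ∈ G

/-- A decreasing event. -/
def DecreasingEvent (G : Set (Config d)) : Prop :=
  ∀ ω ω' : Config d, (∀ x, ω' x = true → ω x = true) → ω ∈ G → ω' ∈ G

/-- The event `G` depends only on the coordinates in `B`. -/
def DependsOn (G : Set (Config d)) (B : Set (Pt d)) : Prop :=
  ∀ ω ω' : Config d, (∀ x ∈ B, ω x = ω' x) → (ω ∈ G ↔ ω' ∈ G)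

/-- The edge boundary of `A` in `Sset`: (directed representatives of) edges of `ℤ^d`
with one endpoint in `A` and the other in `Sset \ A`. -/
def edgeBd (Sset A : Set (Pt d)) : Set (Pt d × Pt d) :=
  {p | adj p.1 p.2 ∧ p.1 ∈ A ∧ p.2 ∈ Sset \ A}

/-- The density `η(u) = P[0 ∈ S_∞]` of the infinite cluster. -/
noncomputable def eta (d : ℕ) (P : Measure (Config d)) : ℝ :=
  (P {ω | (0 : Pt d) ∈ Sinf ω}).toReal

/-- The first local-uniqueness event of axiom S1. -/
def locUniq1 (d : ℕ) (R : ℕ) : Set (Config d) :=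
  {ω | (Sr ω R ∩ ballZ (0 : Pt d) R).Nonempty}

/-- The second local-uniqueness event of axiom S1. -/
def locUniq2 (d : ℕ) (R : ℕ) : Set (Config d) :=
  {ω | ∀ x ∈ Sr ω ((R : ℝ)/10) ∩ ballZ (0 : Pt d) R,
       ∀ y ∈ Sr ω ((R : ℝ)/10) ∩ ballZ (0 : Pt d) R,
       connIn (SS ω ∩ ballZ (0 : Pt d) (2*R)) x y}


/-! ### Renormalization scales and good/bad boxes -/

/-- The scales `l_k = l_0·4^{k^{θ_sc}}`. -/
def lSc (l0 θsc k : ℕ) : ℕ := l0 * 4 ^ (k ^ θsc)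

/-- The scales `r_k = r_0·2^{k^{θ_sc}}`. -/
def rSc (r0 θsc k : ℕ) : ℕ := r0 * 2 ^ (k ^ θsc)

/-- The scales `L_0 = L_0`, `L_{k+1} = l_k·L_k`. -/
def LSc (l0 L0 θsc : ℕ) : ℕ → ℕ
  | 0 => L0
  | k+1 => lSc l0 θsc k * LSc l0 L0 θsc k

/-- The renormalized lattice `G = L·ℤ^d`. -/
def lattice (d L : ℕ) : Set (Pt d) := {x | ∀ i, (L : ℤ) ∣ x i}

/-- The box `x + [0,n)^d`. -/
def box (x : Pt d) (n : ℕ) : Set (Pt d) := {y | ∀ i, x i ≤ y i ∧ y i < x i + n}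

/-- The box `x + [lo,hi)^d`. -/
def boxI (x : Pt d) (lo hi : ℤ) : Set (Pt d) := {y | ∀ i, x i + lo ≤ y i ∧ y i < x i + hi}

/-- The corner `x + e·L_0` of the sub-box indexed by `e ∈ {0,1}^d`. -/
def subCorner (x : Pt d) (L0 : ℕ) (e : Fin d → Bool) : Pt d :=
  fun i => x i + (if e i then (L0 : ℤ) else 0)

/-- `C` is a connected component of `S_{L0} ∩ B` of cardinality at least `(3/4)·η·L_0^d`. -/
def bigCompIn (ω : Config d) (η : ℝ) (L0 : ℕ) (B : Set (Pt d)) (C : Set (Pt d)) : Prop :=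
  (∃ w ∈ Sr ω (L0 : ℝ) ∩ B, C = cluster (Sr ω (L0 : ℝ) ∩ B) w) ∧
  (3/4 : ℝ) * η * (L0 : ℝ) ^ d ≤ C.ncard

/-- The event `A^u_x`: each of the `2^d` sub-boxes of side `L_0` of `x + [0,2L_0)^d` contains a
connected component of `S_{L_0}` with at least `(3/4)·η·L_0^d` vertices, and all these components
are connected in `S ∩ (x+[0,2L_0)^d)`. -/
def eventA (d : ℕ) (η : ℝ) (L0 : ℕ) (x : Pt d) : Set (Config d) :=
  {ω | (∀ e : Fin d → Bool, ∃ C, bigCompIn ω η L0 (box (subCorner x L0 e) L0) C) ∧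
       (∀ e e' : Fin d → Bool, ∀ C C' : Set (Pt d), ∀ y z : Pt d,
          bigCompIn ω η L0 (box (subCorner x L0 e) L0) C →
          bigCompIn ω η L0 (box (subCorner x L0 e') L0) C' →
          y ∈ C → z ∈ C' → connIn (SS ω ∩ box x (2*L0)) y z)}

/-- The event `B^u_x`: each of the `2^d` sub-boxes of side `L_0` of `x + [0,2L_0)^d` contains at
most `(5/4)·η·L_0^d` vertices of `S_{L_0}`. -/
def eventB (d : ℕ) (η : ℝ) (L0 : ℕ) (x : Pt d) : Set (Config d) :=
  {ω | ∀ e : Fin d → Bool,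
    ((Sr ω (L0 : ℝ) ∩ box (subCorner x L0 e) L0).ncard : ℝ) ≤ (5/4 : ℝ) * η * (L0 : ℝ) ^ d}

/-- The recursive cascading of a family of "bad" seed events along the renormalization scheme. -/
def cascade (d : ℕ) (r0 l0 L0 θsc : ℕ) (seed : Pt d → Set (Config d)) :
    ℕ → Pt d → Set (Config d)
  | 0, x => seed x
  | k+1, x => {ω | ∃ x₁ x₂ : Pt d,
      x₁ ∈ lattice d (LSc l0 L0 θsc k) ∩ box x (LSc l0 L0 θsc (k+1)) ∧
      x₂ ∈ lattice d (LSc l0 L0 θsc k) ∩ box x (LSc l0 L0 θsc (k+1)) ∧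
      rSc r0 θsc k * LSc l0 L0 θsc k ≤ distInf x₁ x₂ ∧
      ω ∈ cascade d r0 l0 L0 θsc seed k x₁ ∧ ω ∈ cascade d r0 l0 L0 θsc seed k x₂}

/-- The event `Ā^u_{x,k}`. -/
def Abar (d : ℕ) (η : ℝ) (r0 l0 L0 θsc : ℕ) : ℕ → Pt d → Set (Config d) :=
  cascade d r0 l0 L0 θsc (fun x => (eventA d η L0 x)ᶜ)

/-- The event `B̄^u_{x,k}`. -/
def Bbar (d : ℕ) (η : ℝ) (r0 l0 L0 θsc : ℕ) : ℕ → Pt d → Set (Config d) :=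
  cascade d r0 l0 L0 θsc (fun x => (eventB d η L0 x)ᶜ)

/-- The event that `x ∈ G_k` is `k`-bad. -/
def kBad (d : ℕ) (η : ℝ) (r0 l0 L0 θsc k : ℕ) (x : Pt d) : Set (Config d) :=
  Abar d η r0 l0 L0 θsc k x ∪ Bbar d η r0 l0 L0 θsc k x

/-!
Two distinct big components of a box are disjoint clusters of `S_{L_0}` in it, so together they
would have at least `(3/2)·η·L_0^d` vertices, more than the `(5/4)·η·L_0^d` allowed by `B`.
Nearest neighbours `x, y` of `L_0·ℤ^d` differ by `±L_0` in a single coordinate, so one of the two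
boxes `x + [0,L_0)^d`, `y + [0,L_0)^d` is a sub-box of the other's `2L_0`-box, and `A` at that
corner connects the two big components.
-/

lemma subCorner_false (x : Pt d) (L0 : ℕ) : subCorner x L0 (fun _ => false) = x := by
  funext i; simp [subCorner]

lemma dist1_comm (a b : Pt d) : dist1 a b = dist1 b a := by
  unfold dist1
  congr! 1 with i
  rw [← Int.natAbs_neg, neg_sub]

instance (T : Set (Pt d)) : Std.Symm (stepRel T) :=
  ⟨fun _ _ ⟨hab, ha, hb⟩ => ⟨by rwa [adj, dist1_comm], hb, ha⟩⟩

lemma connIn_symm {T : Set (Pt d)} {a b : Pt d} (h : connIn T a b) : connIn T b a :=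
  ⟨h.2.1, h.1, Std.Symm.symm _ _ h.2.2⟩

lemma connIn_trans {T : Set (Pt d)} {a b c : Pt d} (h₁ : connIn T a b) (h₂ : connIn T b c) :
    connIn T a c :=
  ⟨h₁.1, h₂.2.1, h₁.2.2.trans h₂.2.2⟩

lemma connIn_mono {T T' : Set (Pt d)} (h : T ⊆ T') {a b : Pt d} (hab : connIn T a b) :
    connIn T' a b :=
  ⟨h hab.1, h hab.2.1,
    Relation.ReflTransGen.mono (fun _ _ huv => ⟨huv.1, h huv.2.1, h huv.2.2⟩) _ _ hab.2.2⟩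

lemma cluster_subset (T : Set (Pt d)) (w : Pt d) : cluster T w ⊆ T :=
  fun _ ha => ha.2.1

lemma cluster_eq_of_mem {T : Set (Pt d)} {w w' z : Pt d}
    (hz : z ∈ cluster T w) (hz' : z ∈ cluster T w') : cluster T w = cluster T w' := by
  ext v
  exact ⟨fun hv => connIn_trans hz' (connIn_trans (connIn_symm hz) hv),
    fun hv => connIn_trans hz (connIn_trans (connIn_symm hz') hv)⟩

lemma cluster_eq_of_ncard_lt_add {T : Set (Pt d)} (hT : T.Finite) {w w' : Pt d}
    (h : T.ncard < (cluster T w).ncard + (cluster T w').ncard) :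
    cluster T w = cluster T w' := by
  have hfin := hT.subset (cluster_subset T w)
  rw [← Set.ncard_union_add_ncard_inter _ _ hfin (hT.subset (cluster_subset T w'))] at h
  have hunion : (cluster T w ∪ cluster T w').ncard ≤ T.ncard :=
    Set.ncard_le_ncard (Set.union_subset (cluster_subset T w) (cluster_subset T w')) hT
  obtain ⟨z, hz, hz'⟩ : (cluster T w ∩ cluster T w').Nonempty := by
    rw [← Set.ncard_pos (hfin.inter_of_left _)]
    omega
  exact cluster_eq_of_mem hz hz'

lemma box_finite (z : Pt d) (n : ℕ) : (box z n).Finite :=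
  Set.Finite.pi' fun i => Set.finite_Ico (z i) (z i + n)

lemma existsUnique_bigCompIn {ω : Config d} {η : ℝ} (hη : 0 < η) {L0 : ℕ} (hL0 : 0 < L0)
    {z : Pt d} (hA : ω ∈ eventA d η L0 z) (hB : ω ∈ eventB d η L0 z) :
    ∃! C, bigCompIn ω η L0 (box z L0) C := by
  obtain ⟨C, hC⟩ := subCorner_false z L0 ▸ hA.1 fun _ => false
  have hBz := subCorner_false z L0 ▸ hB fun _ => false
  refine ⟨C, hC, fun C' hC' => ?_⟩
  obtain ⟨⟨w, -, rfl⟩, hcard⟩ := hC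
  obtain ⟨⟨w', -, rfl⟩, hcard'⟩ := hC'
  have hvol : 0 < η * (L0 : ℝ) ^ d := by positivity
  refine (cluster_eq_of_ncard_lt_add ((box_finite z L0).subset Set.inter_subset_right) ?_).symm
  exact_mod_cast (show ((_ : ℕ) : ℝ) < (_ : ℕ) + (_ : ℕ) by linarith)

lemma exists_eq_and_eq_zero_of_sum_eq_of_dvd {ι : Type*} [Fintype ι] [DecidableEq ι]
    {a : ι → ℕ} {L : ℕ} (hL : 0 < L) (hdvd : ∀ i, L ∣ a i) (hsum : ∑ i, a i = L) :
    ∃ i, a i = L ∧ ∀ j ≠ i, a j = 0 := by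
  obtain ⟨i, -, hi⟩ := Finset.exists_ne_zero_of_sum_ne_zero (hsum.trans_ne hL.ne')
  have hle : a i ≤ L := hsum ▸ Finset.single_le_sum (fun _ _ => Nat.zero_le _) (Finset.mem_univ i)
  have hai : a i = L := le_antisymm hle (Nat.le_of_dvd (Nat.pos_of_ne_zero hi) (hdvd i))
  have hrest := Finset.add_sum_erase Finset.univ a (Finset.mem_univ i)
  rw [hsum, hai, add_eq_left, Finset.sum_eq_zero_iff] at hrest
  exact ⟨i, hai, fun j hj => hrest j (Finset.mem_erase.mpr ⟨hj, Finset.mem_univ j⟩)⟩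

lemma exists_subCorner_eq_of_dist1_eq {L : ℕ} (hL : 0 < L) {x y : Pt d}
    (hx : x ∈ lattice d L) (hy : y ∈ lattice d L) (hxy : dist1 x y = L) :
    ∃ e, subCorner x L e = y ∨ subCorner y L e = x := by
  classical
  obtain ⟨i, hi, hj⟩ := exists_eq_and_eq_zero_of_sum_eq_of_dvd (a := fun i => (x i - y i).natAbs)
    hL (fun i => by simpa using Int.natAbs_dvd_natAbs.mpr (dvd_sub (hx i) (hy i))) hxy
  refine ⟨fun j => decide (j = i), ?_⟩
  rcases Int.natAbs_eq_iff.mp hi with h | h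
  on_goal 1 => right
  on_goal 2 => left
  all_goals
    funext j
    by_cases hji : j = i
    · subst hji; simp [subCorner]; omega
    · have := hj j hji; simp [subCorner, hji]; omega

theorem stmt4_general (d : ℕ) (η : ℝ) (hη : 0 < η)
    (L0 : ℕ) (hL0 : 0 < L0)
    (x y : Pt d) (hx : x ∈ lattice d L0) (hy : y ∈ lattice d L0)
    (hxy : dist1 x y = L0)
    (ω : Config d)
    (hgoodx : ω ∈ eventA d η L0 x ∩ eventB d η L0 x)
    (hgoody : ω ∈ eventA d η L0 y ∩ eventB d η L0 y) :
    -- (a) uniqueness of the big component in each box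
    (∀ z ∈ ({x, y} : Set (Pt d)),
      ∃! C : Set (Pt d), bigCompIn ω η L0 (box z L0) C) ∧
    -- (b) the big components of the two boxes are connected locally
    (∀ Cx Cy : Set (Pt d),
      bigCompIn ω η L0 (box x L0) Cx → bigCompIn ω η L0 (box y L0) Cy →
      ∀ p ∈ Cx, ∀ q ∈ Cy,
        connIn (SS ω ∩ (box x (2*L0) ∪ box y (2*L0))) p q) := by
  refine ⟨?_, fun Cx Cy hCx hCy p hp q hq => ?_⟩
  · rintro z (rfl | rfl)
    exacts [existsUnique_bigCompIn hη hL0 hgoodx.1 hgoodx.2,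
      existsUnique_bigCompIn hη hL0 hgoody.1 hgoody.2]
  obtain ⟨e, rfl | rfl⟩ := exists_subCorner_eq_of_dist1_eq hL0 hx hy hxy
  · refine connIn_mono (Set.inter_subset_inter_right _ Set.subset_union_left) ?_
    exact hgoodx.1.2 (fun _ => false) e Cx Cy p q (by rwa [subCorner_false]) hCy hp hq
  · refine connIn_mono (Set.inter_subset_inter_right _ Set.subset_union_right) ?_
    exact hgoody.1.2 e (fun _ => false) Cx Cy p q hCx (by rwa [subCorner_false]) hp hq

/-- Lemma 2.6 / DRS Lemma 5.2. If `x,y` are nearest neighbours of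
`G_0 = L_0·ℤ^d` and both are `0`-good, then (a) each of the graphs `S_{L_0} ∩ (z+[0,L_0)^d)`,
`z ∈ {x,y}`, contains a unique connected component `C_z` with at least `(3/4)η·L_0^d` vertices,
and (b) `C_x` and `C_y` are connected in `S ∩ ((x+[0,2L_0)^d) ∪ (y+[0,2L_0)^d))`. -/
theorem stmt4 (d : ℕ) (hd : 2 ≤ d) (η : ℝ) (hη : 0 < η) (hη1 : η ≤ 1)
    (L0 : ℕ) (hL0 : 0 < L0)
    (x y : Pt d) (hx : x ∈ lattice d L0) (hy : y ∈ lattice d L0)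
    (hxy : dist1 x y = L0)
    (ω : Config d)
    (hgoodx : ω ∈ eventA d η L0 x ∩ eventB d η L0 x)
    (hgoody : ω ∈ eventA d η L0 y ∩ eventB d η L0 y) :
    -- (a) uniqueness of the big component in each box
    (∀ z ∈ ({x, y} : Set (Pt d)),
      ∃! C : Set (Pt d), bigCompIn ω η L0 (box z L0) C) ∧
    -- (b) the big components of the two boxes are connected locally
    (∀ Cx Cy : Set (Pt d),
      bigCompIn ω η L0 (box x L0) Cx → bigCompIn ω η L0 (box y L0) Cy →
      ∀ p ∈ Cx, ∀ q ∈ Cy,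
        connIn (SS ω ∩ (box x (2*L0) ∪ box y (2*L0))) p q) :=
  stmt4_general d η hη L0 hL0 x y hx hy hxy ω hgoodx hgoody

end Perco
end

section
/- Let θ_sc ≥ 1 be an integer, let r_0, l_0, L_0 be positive integers, and define l_k = l_0·4^{k^{θ_sc}}, r_k = r_0·2^{k^{θ_sc}}, L_k = l_{k−1}·L_{k−1} for k ≥ 1. Fix θ_iso ∈ (0,1), let d ≥ 2, assume R ≥ L_0^{3d²/θ_iso}, and set s = max{s' : L_{s'}^{3d²} ≤ R^{θ_iso}} and r = ⌊s/2⌋. Then: (i) L_s ≥ (1/(4l_0))·R^{θ_iso/(3d²(1+2^{θ_sc}))}; (ii) L_r² ≤ L_0·L_s; (iii) there exists c = c(θ_iso, θ_sc, l_0, L_0) > 0 such that s ≥ c·(log R)^{1/(1+θ_sc)} − 1 for all R ≥ L_0^{3d²/θ_iso}. -/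
open MeasureTheory Filter
open scoped ENNReal

namespace Perco

variable {d : ℕ}

/-- `s` is the largest integer with `L_s^{3d²} ≤ R^{θ_iso}`. -/
def isScaleS (d l0 L0 θsc : ℕ) (θiso : ℝ) (R s : ℕ) : Prop :=
  ((LSc l0 L0 θsc s : ℝ)) ^ (3*d^2) ≤ (R : ℝ) ^ θiso ∧
  ∀ s' : ℕ, ((LSc l0 L0 θsc s' : ℝ)) ^ (3*d^2) ≤ (R : ℝ) ^ θiso → s' ≤ s

/-!
Since `4^{k^θ} ≤ l_k ≤ L_{k+1}` and `(k+1)^θ ≤ 1 + 2^θ k^θ` (with `θ = θ_sc`), one step of the recursion is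
polynomial: `L_{s+1} ≤ 4 l_0 L_s^{1+2^θ}`. Together with the maximality of `s`, i.e.
`R^{θ_iso} < L_{s+1}^{3d²}`, this gives (i). The scales are super-multiplicative,
`L_a L_b ≤ L_0 L_{a+b}`, which gives (ii). Finally `L_k ≤ (4 l_0 L_0)^{k^{θ+1}+1}`, so taking
logarithms in the maximality of `s` yields `θ_iso log R ≤ 6d² log(4 l_0 L_0) (s+1)^{θ+1}`,
which is (iii).
-/

variable {l0 L0 θsc : ℕ}

lemma lSc_mono : Monotone (lSc l0 θsc) := fun _ _ hab =>
  Nat.mul_le_mul_left _ (Nat.pow_le_pow_right (by norm_num) (Nat.pow_le_pow_left hab _))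

lemma LSc_pos (hl0 : 0 < l0) (hL0 : 0 < L0) (k : ℕ) : 0 < LSc l0 L0 θsc k := by
  induction k with
  | zero => exact hL0
  | succ k ih => exact Nat.mul_pos (Nat.mul_pos hl0 (by positivity)) ih

lemma LSc_mono (hl0 : 0 < l0) : Monotone (LSc l0 L0 θsc) :=
  monotone_nat_of_le_succ fun k => Nat.le_mul_of_pos_left _ (Nat.mul_pos hl0 (by positivity))

lemma LSc_mul_LSc_le (a b : ℕ) :
    LSc l0 L0 θsc a * LSc l0 L0 θsc b ≤ L0 * LSc l0 L0 θsc (a + b) := by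
  induction b with
  | zero => rw [LSc, Nat.add_zero, Nat.mul_comm]
  | succ b ih =>
    calc LSc l0 L0 θsc a * LSc l0 L0 θsc (b + 1)
        = lSc l0 θsc b * (LSc l0 L0 θsc a * LSc l0 L0 θsc b) := by rw [LSc]; ring
      _ ≤ lSc l0 θsc (a + b) * (L0 * LSc l0 L0 θsc (a + b)) :=
          Nat.mul_le_mul (lSc_mono (Nat.le_add_left b a)) ih
      _ = L0 * LSc l0 L0 θsc (a + b + 1) := by rw [LSc]; ring

lemma LSc_half_sq_le (hl0 : 0 < l0) (s : ℕ) :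
    LSc l0 L0 θsc (s / 2) ^ 2 ≤ L0 * LSc l0 L0 θsc s :=
  calc LSc l0 L0 θsc (s / 2) ^ 2 ≤ L0 * LSc l0 L0 θsc (s / 2 + s / 2) :=
        (sq _).trans_le (LSc_mul_LSc_le _ _)
    _ ≤ L0 * LSc l0 L0 θsc s := Nat.mul_le_mul_left _ (LSc_mono hl0 (by omega))

lemma succ_pow_le_one_add_two_pow_mul_pow (θ k : ℕ) : (k + 1) ^ θ ≤ 1 + 2 ^ θ * k ^ θ := by
  rcases Nat.eq_zero_or_pos k with rfl | hk
  · simp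
  · rw [← Nat.mul_pow]
    exact (Nat.pow_le_pow_left (by omega) θ).trans (Nat.le_add_left _ _)

lemma four_pow_le_four_mul_LSc_pow (hl0 : 0 < l0) (hL0 : 0 < L0) (k : ℕ) :
    4 ^ (k ^ θsc) ≤ 4 * LSc l0 L0 θsc k ^ (2 ^ θsc) := by
  cases k with
  | zero =>
    calc 4 ^ (0 ^ θsc) ≤ 4 := Nat.pow_le_pow_right (by norm_num) (zero_pow_le_one θsc)
      _ ≤ 4 * LSc l0 L0 θsc 0 ^ (2 ^ θsc) := Nat.le_mul_of_pos_right 4 (by positivity)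
  | succ k =>
    have hk : 4 ^ (k ^ θsc) ≤ LSc l0 L0 θsc (k + 1) :=
      (Nat.le_mul_of_pos_left _ hl0).trans (Nat.le_mul_of_pos_right _ (LSc_pos hl0 hL0 k))
    calc 4 ^ ((k + 1) ^ θsc) ≤ 4 ^ (1 + 2 ^ θsc * k ^ θsc) :=
          Nat.pow_le_pow_right (by norm_num) (succ_pow_le_one_add_two_pow_mul_pow θsc k)
      _ = 4 * (4 ^ (k ^ θsc)) ^ (2 ^ θsc) := by rw [pow_add, pow_one, mul_comm (2 ^ θsc), pow_mul]
      _ ≤ 4 * LSc l0 L0 θsc (k + 1) ^ (2 ^ θsc) := by gcongr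

lemma LSc_succ_le (hl0 : 0 < l0) (hL0 : 0 < L0) (k : ℕ) :
    LSc l0 L0 θsc (k + 1) ≤ 4 * l0 * LSc l0 L0 θsc k ^ (2 ^ θsc + 1) :=
  calc LSc l0 L0 θsc (k + 1) = l0 * 4 ^ (k ^ θsc) * LSc l0 L0 θsc k := rfl
    _ ≤ l0 * (4 * LSc l0 L0 θsc k ^ (2 ^ θsc)) * LSc l0 L0 θsc k := by
        gcongr; exact four_pow_le_four_mul_LSc_pow hl0 hL0 k
    _ = 4 * l0 * LSc l0 L0 θsc k ^ (2 ^ θsc + 1) := by ring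

lemma lSc_le_pow (hL0 : 0 < L0) (k : ℕ) :
    lSc l0 θsc k ≤ (4 * l0 * L0) ^ ((k + 1) ^ θsc) :=
  calc lSc l0 θsc k ≤ 4 ^ ((k + 1) ^ θsc) * l0 ^ ((k + 1) ^ θsc) := by
        rw [lSc, mul_comm]
        gcongr
        · norm_num
        · exact Nat.le_succ k
        · exact Nat.le_self_pow (by positivity) l0
    _ ≤ (4 * l0 * L0) ^ ((k + 1) ^ θsc) := by
        rw [← mul_pow]; exact Nat.pow_le_pow_left (Nat.le_mul_of_pos_right _ hL0) _

lemma LSc_le_pow (hl0 : 0 < l0) (hL0 : 0 < L0) (k : ℕ) :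
    LSc l0 L0 θsc k ≤ (4 * l0 * L0) ^ (k ^ (θsc + 1) + 1) := by
  induction k with
  | zero => simpa [LSc] using Nat.le_mul_of_pos_left L0 (by positivity : 0 < 4 * l0)
  | succ k ih =>
    have hexp : (k + 1) ^ θsc + (k ^ (θsc + 1) + 1) ≤ (k + 1) ^ (θsc + 1) + 1 := by
      have := Nat.pow_le_pow_left (Nat.le_succ k) θsc
      rw [pow_succ, pow_succ]; nlinarith
    calc LSc l0 L0 θsc (k + 1) = lSc l0 θsc k * LSc l0 L0 θsc k := rfl
      _ ≤ (4 * l0 * L0) ^ ((k + 1) ^ θsc) * (4 * l0 * L0) ^ (k ^ (θsc + 1) + 1) :=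
          Nat.mul_le_mul (lSc_le_pow hL0 k) ih
      _ ≤ (4 * l0 * L0) ^ ((k + 1) ^ (θsc + 1) + 1) := by
          rw [← pow_add]; exact Nat.pow_le_pow_right (by positivity) hexp

lemma le_mul_of_pow_le_mul_pow_pow {y a x : ℝ} {N E : ℕ} (ha : 1 ≤ a) (hx : 0 ≤ x)
    (hNE : N * E ≠ 0) (h : y ^ (N * E) ≤ (a * x ^ E) ^ N) : y ≤ a * x := by
  refine le_of_pow_le_pow_left₀ hNE (by positivity) (h.trans ?_)
  calc (a * x ^ E) ^ N = a ^ N * x ^ (N * E) := by rw [mul_pow, ← pow_mul, mul_comm E]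
    _ ≤ a ^ (N * E) * x ^ (N * E) := by
        gcongr
        exact Nat.le_mul_of_pos_right N (Nat.pos_of_ne_zero (right_ne_zero_of_mul hNE))
    _ = (a * x) ^ (N * E) := (mul_pow ..).symm

lemma rpow_div_le_four_mul_LSc (hl0 : 0 < l0) (hL0 : 0 < L0) {N : ℕ} (hN : N ≠ 0)
    {R θ : ℝ} (hR : 0 ≤ R) {s : ℕ} (h : R ^ θ ≤ (LSc l0 L0 θsc (s + 1) : ℝ) ^ N) :
    R ^ (θ / (N * (1 + 2 ^ θsc))) ≤ 4 * l0 * LSc l0 L0 θsc s := by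
  refine le_mul_of_pow_le_mul_pow_pow (N := N) (E := 2 ^ θsc + 1) (by norm_cast; omega)
    (by positivity) (by positivity) ?_
  have hexp : θ / (N * (1 + 2 ^ θsc)) * ((N * (2 ^ θsc + 1) : ℕ) : ℝ) = θ := by
    push_cast; field_simp; ring
  rw [← Real.rpow_mul_natCast hR, hexp]
  exact h.trans (pow_le_pow_left₀ (by positivity) (mod_cast LSc_succ_le hl0 hL0 s) N)

lemma mul_log_le_of_rpow_le_LSc (hl0 : 0 < l0) (hL0 : 0 < L0) {N : ℕ} {R θ : ℝ} (hR : 0 < R)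
    {s : ℕ} (h : R ^ θ ≤ (LSc l0 L0 θsc (s + 1) : ℝ) ^ N) :
    θ * Real.log R ≤ 2 * N * Real.log (4 * l0 * L0) * (s + 1) ^ (θsc + 1) := by
  have hM : (1 : ℝ) ≤ 4 * l0 * L0 := by norm_cast; nlinarith
  have hexp : ((s + 1) ^ (θsc + 1) + 1 : ℝ) ≤ 2 * (s + 1) ^ (θsc + 1) := by
    have : (1 : ℝ) ≤ (s + 1) ^ (θsc + 1) := one_le_pow₀ (by linarith [s.cast_nonneg (α := ℝ)])
    linarith
  calc θ * Real.log R = Real.log (R ^ θ) := (Real.log_rpow hR θ).symm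
    _ ≤ Real.log ((LSc l0 L0 θsc (s + 1) : ℝ) ^ N) := Real.log_le_log (by positivity) h
    _ ≤ Real.log (((4 * l0 * L0 : ℝ) ^ ((s + 1) ^ (θsc + 1) + 1)) ^ N) := by
        gcongr
        · exact pow_pos (mod_cast LSc_pos hl0 hL0 _) N
        · exact_mod_cast LSc_le_pow hl0 hL0 (s + 1)
    _ = N * ((s + 1) ^ (θsc + 1) + 1) * Real.log (4 * l0 * L0) := by
        rw [Real.log_pow, Real.log_pow]; push_cast; ring
    _ ≤ N * (2 * (s + 1) ^ (θsc + 1)) * Real.log (4 * l0 * L0) := by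
        have := Real.log_nonneg hM
        gcongr
    _ = 2 * N * Real.log (4 * l0 * L0) * (s + 1) ^ (θsc + 1) := by ring

lemma rpow_one_div_le_of_le_pow {u t : ℝ} {n : ℕ} (hu : 0 ≤ u) (ht : 0 ≤ t)
    (h : u ≤ t ^ (n + 1)) : u ^ (1 / (1 + n : ℝ)) ≤ t := by
  rw [one_div, Real.rpow_inv_le_iff_of_pos hu ht (by positivity), add_comm]
  exact_mod_cast h

lemma isScaleS.rpow_lt_LSc_succ_pow {d : ℕ} {θiso : ℝ} {R s : ℕ}
    (h : isScaleS d l0 L0 θsc θiso R s) :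
    (R : ℝ) ^ θiso < (LSc l0 L0 θsc (s + 1) : ℝ) ^ (3 * d ^ 2) :=
  lt_of_not_ge fun hle => (h.2 (s + 1) hle).not_gt s.lt_succ_self

theorem stmt7_general (d θsc l0 L0 : ℕ) (hd : 2 ≤ d)
    (hl0 : 0 < l0) (hL0 : 0 < L0)
    (θiso : ℝ) (hθiso : θiso ∈ Set.Ioo (0:ℝ) 1) :
    ∃ c > (0:ℝ), ∀ R : ℕ, (L0 : ℝ) ^ ((3*(d:ℝ)^2)/θiso) ≤ (R : ℝ) →
      ∀ s : ℕ, isScaleS d l0 L0 θsc θiso R s →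
        ((1/(4*(l0:ℝ))) * (R : ℝ) ^ (θiso/(3*(d:ℝ)^2*(1 + (2:ℝ)^θsc))) ≤ LSc l0 L0 θsc s) ∧
        (LSc l0 L0 θsc (s/2))^2 ≤ L0 * LSc l0 L0 θsc s ∧
        c * (Real.log R) ^ ((1:ℝ)/(1 + (θsc : ℝ))) - 1 ≤ (s : ℝ) := by
  have hθ := hθiso.1
  have hN : 3 * d ^ 2 ≠ 0 := Nat.mul_ne_zero three_ne_zero (pow_ne_zero 2 (by omega))
  set K : ℝ := 2 * (3 * d ^ 2 : ℕ) * Real.log (4 * l0 * L0)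
  have hK : 0 < K := by
    have : (1 : ℝ) < 4 * l0 * L0 := by norm_cast; nlinarith
    have := Real.log_pos this
    positivity
  refine ⟨(θiso / K) ^ (1 / (1 + θsc : ℝ)), by positivity, fun R hR s hs => ?_⟩
  have hR1 : (1 : ℝ) ≤ R := (Real.one_le_rpow (by exact_mod_cast hL0) (by positivity)).trans hR
  have hmax := hs.rpow_lt_LSc_succ_pow.le
  refine ⟨?_, LSc_half_sq_le hl0 s, ?_⟩
  · have := rpow_div_le_four_mul_LSc hl0 hL0 hN (by positivity) hmax
    push_cast at this
    rw [one_div_mul_eq_div, div_le_iff₀ (by positivity)]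
    linarith
  · have key := mul_log_le_of_rpow_le_LSc hl0 hL0 (by positivity) hmax
    have hbound : θiso / K * Real.log R ≤ (s + 1) ^ (θsc + 1) := by
      rw [div_mul_eq_mul_div, div_le_iff₀ hK]
      linarith
    have hlog := Real.log_nonneg hR1
    rw [← Real.mul_rpow (by positivity) hlog]
    linarith [rpow_one_div_le_of_le_pow (by positivity) (by positivity) hbound]

/-- Deterministic facts about the renormalization scales: with
`s = max{s' : L_{s'}^{3d²} ≤ R^{θ_iso}}` and `r = ⌊s/2⌋`, one has
(i) `L_s ≥ (4l_0)⁻¹·R^{θ_iso/(3d²(1+2^{θ_sc}))}`, (ii) `L_r² ≤ L_0·L_s`, and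
(iii) `s ≥ c·(log R)^{1/(1+θ_sc)} − 1` for a constant `c = c(θ_iso,θ_sc,l_0,L_0) > 0`. -/
theorem stmt7 (d θsc r0 l0 L0 : ℕ) (hd : 2 ≤ d) (hθsc : 1 ≤ θsc)
    (hr0 : 0 < r0) (hl0 : 0 < l0) (hL0 : 0 < L0)
    (θiso : ℝ) (hθiso : θiso ∈ Set.Ioo (0:ℝ) 1) :
    ∃ c > (0:ℝ), ∀ R : ℕ, (L0 : ℝ) ^ ((3*(d:ℝ)^2)/θiso) ≤ (R : ℝ) →
      ∀ s : ℕ, isScaleS d l0 L0 θsc θiso R s →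
        ((1/(4*(l0:ℝ))) * (R : ℝ) ^ (θiso/(3*(d:ℝ)^2*(1 + (2:ℝ)^θsc))) ≤ LSc l0 L0 θsc s) ∧
        (LSc l0 L0 θsc (s/2))^2 ≤ L0 * LSc l0 L0 θsc s ∧
        c * (Real.log R) ^ ((1:ℝ)/(1 + (θsc : ℝ))) - 1 ≤ (s : ℝ) :=
  stmt7_general d θsc l0 L0 hd hl0 hL0 θiso hθiso

end Perco
end

section
/- Let d ≥ 2, let L_0 divide L_s, G_0 = L_0·Z^d, G_s = L_s·Z^d, and let R ≥ 5L_s. Let G ⊆ G_0 ∩ B(0, 2R−L_s) satisfy: (i) for every x ∈ G_s ∩ B(0, 2R−2L_s), the set G ∩ (x+[0,L_s)^d) is connected in G_0 and |G ∩ (x+[0,L_s)^d)| > (1/2)·(L_s/L_0)^d; (ii) there exists γ₄ > 0 such that for every x ∈ G_s ∩ B(0, 2R−3L_s) and every subset a of G ∩ (x+[−L_s,2L_s)^d) with |a| ∈ [ (1/2)(L_s/L_0)^d , (3^d − 1/2)(L_s/L_0)^d ], the boundary of a within G ∩ (x+[−L_s,2L_s)^d) has at least γ₄·(L_s/L_0)^{d−1}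 elements. Then for every A ⊆ G ∩ B(0, 2R−4L_s) with |A| ≥ 7^{−d}·(L_s/L_0)^{2d²}, one has |∂_G A| ≥ γ·|A|^{(d−1)/d}, where γ = min( 1/14 , c_*·γ₄/(4d·3^d) ) and c_* > 0 is the isoperimetric constant of Z^d (the constant such that every finite nonempty F ⊆ Z^d has at least c_*·|F|^{(d−1)/d} nearest-neighbor edges between F and its complement). -/
open MeasureTheory Filter
open scoped ENNReal

namespace Perco

variable {d : ℕ}

/-- The event `H`: (a) every vertex of `G_r ∩ B(0,3R)` is `r`-good, and (b) any two points of
`S_{L_s}` lying in a common box `z+[−2L_s,2L_s)^d`, `z ∈ B(0,2R)`, are connected inside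
`S ∩ (z+[−4L_s,4L_s)^d)`. -/
def eventH (d : ℕ) (η : ℝ) (r0 l0 L0 θsc s r R : ℕ) : Set (Config d) :=
  {ω | (∀ z ∈ lattice d (LSc l0 L0 θsc r) ∩ ballZ (0 : Pt d) (3*R),
          ω ∉ kBad d η r0 l0 L0 θsc r z) ∧
       (∀ z ∈ ballZ (0 : Pt d) (2*R),
          ∀ x ∈ Sr ω ((LSc l0 L0 θsc s : ℕ) : ℝ) ∩
                boxI z (-(2*(LSc l0 L0 θsc s) : ℤ)) (2*(LSc l0 L0 θsc s)),
          ∀ y ∈ Sr ω ((LSc l0 L0 θsc s : ℕ) : ℝ) ∩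
                boxI z (-(2*(LSc l0 L0 θsc s) : ℤ)) (2*(LSc l0 L0 θsc s)),
          connIn (SS ω ∩ boxI z (-(4*(LSc l0 L0 θsc s) : ℤ)) (4*(LSc l0 L0 θsc s))) x y)}

/-- The boundary of `A` within `g`, in the `L`-renormalized lattice: pairs of vertices of `g` at
`ℓ¹`-distance `L` with one vertex in `A` and the other in `g ∖ A`. -/
def bdWithin (L : ℕ) (g A : Set (Pt d)) : Set (Pt d × Pt d) :=
  {p | dist1 p.1 p.2 = L ∧ p.1 ∈ A ∧ p.2 ∈ g \ A}

/-- One step of an `L`-renormalized nearest-neighbour path inside `T`. -/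
def stepRelL (L : ℕ) (T : Set (Pt d)) (x y : Pt d) : Prop :=
  dist1 x y = L ∧ x ∈ T ∧ y ∈ T

/-- `x` and `y` are connected by an `L`-renormalized nearest-neighbour path inside `T`. -/
def connInL (L : ℕ) (T : Set (Pt d)) (x y : Pt d) : Prop :=
  x ∈ T ∧ y ∈ T ∧ Relation.ReflTransGen (stepRelL L T) x y

/-- The set `T` is connected as a subgraph of the `L`-renormalized lattice. -/
def IsConnL (L : ℕ) (T : Set (Pt d)) : Prop := ∀ x ∈ T, ∀ y ∈ T, connInL L T x y

/-- The infinite product `f_j(r_0/l_0) = ∏_{i=0}^∞ (1 − 3(r_i/l_i)^j)`. -/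
noncomputable def fjProd (r0 l0 θsc j : ℕ) : ℝ :=
  ∏' i : ℕ, (1 - 3 * ((rSc r0 θsc i : ℝ) / (lSc l0 θsc i)) ^ j)

/-- The affine sublattice `x₀ + ∑_{i=1}^j ℤ·e_i`. -/
def sliceSpan {j : ℕ} (x0 : Pt d) (e : Fin j → Pt d) : Set (Pt d) :=
  {y | ∃ c : Fin j → ℤ, y = x0 + ∑ i, c i • e i}

/-- The vectors `e_1,…,e_j` are pairwise orthogonal with `|e_i|₁ = 1`. -/
def orthoUnit {j : ℕ} (e : Fin j → Pt d) : Prop :=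
  (∀ i, dist1 (0 : Pt d) (e i) = 1) ∧
  Pairwise fun i i' => (∑ t, (e i t) * (e i' t)) = 0

/-!
Cut `ℤ^d` into the boxes `L_s u + [0, L_s)^d`, `u ∈ ℤ^d`; each contains at most `m^d` points
of `G_0`, where `m = L_s / L_0`, and a box is dense when `A` fills at least half of it.

If the sparse boxes carry half of `A`, then each of them also contains a point of `G ∖ A`
(`G` fills more than half of it), hence, `G` being connected in the box, an edge of `∂_G A`.
So `|∂_G A| ≥ |A| / m^d`, which is at least `|A|^{(d-1)/d} / 14` because `|A|` is large.

Otherwise the set `F ⊆ ℤ^d` of dense boxes has `|F| ≥ |A| / (2 m^d)`, and by isoperimetry in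
`ℤ^d` at least `c_* |F|^{(d-1)/d} / (2d)` boxes of `F` have a neighbour outside `F`. In the
window `L_s u + [-L_s, 2L_s)^d` of such a box `u`, `A` fills at least half of the box `u` and
at most half of the neighbouring box, so the local isoperimetric inequality yields
`γ₄ m^{d-1}` edges of `∂_G A` in that window. An edge lies in at most `3^d` windows.
-/

section Coarse

variable {d : ℕ}

def coarse (L : ℕ) (p : Pt d) : Pt d := fun i => p i / L

def cell (L : ℕ) (u : Pt d) : Set (Pt d) := box ((L : ℤ) • u) L

def window (L : ℕ) (u : Pt d) : Set (Pt d) := boxI ((L : ℤ) • u) (-(L : ℤ)) (2 * L)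

def unitCube (d : ℕ) : Finset (Pt d) := Fintype.piFinset fun _ => {-1, 0, 1}

lemma card_unitCube : (unitCube d).card = 3 ^ d := by
  simp [unitCube]

lemma smul_mem_lattice (L : ℕ) (u : Pt d) : (L : ℤ) • u ∈ lattice d L :=
  fun i => ⟨u i, rfl⟩

lemma mem_cell_iff {L : ℕ} (hL : 0 < L) {p u : Pt d} : p ∈ cell L u ↔ coarse L p = u := by
  have hL' : (0 : ℤ) < L := by exact_mod_cast hL
  simp only [cell, box, Set.mem_ofPred_eq, Pi.smul_apply, smul_eq_mul, funext_iff, coarse,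
    Int.ediv_eq_iff_of_pos hL', mul_comm]

lemma mem_window_iff {L : ℕ} (hL : 0 < L) {p u : Pt d} :
    p ∈ window L u ↔ coarse L p - u ∈ unitCube d := by
  have hL' : (0 : ℤ) < L := by exact_mod_cast hL
  simp only [window, boxI, unitCube, Set.mem_ofPred_eq, Fintype.mem_piFinset, Finset.mem_insert,
    Finset.mem_singleton, Pi.sub_apply, Pi.smul_apply, smul_eq_mul, coarse]
  refine forall_congr' fun i => ?_
  have hlo := Int.le_ediv_iff_mul_le (a := u i - 1) (b := p i) hL'
  have hhi := Int.ediv_le_iff_le_mul (x := p i) (y := u i + 1) hL'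
  constructor
  · rintro ⟨h1, h2⟩
    have := hlo.2 (by linarith)
    have := hhi.2 (by linarith)
    omega
  · intro h
    have := hlo.1 (by omega)
    have := hhi.1 (by omega)
    constructor <;> linarith

lemma cell_subset_window (L : ℕ) (u : Pt d) : cell L u ⊆ window L u := by
  intro p hp i
  have := hp i
  simp only [Pi.smul_apply, smul_eq_mul] at this ⊢
  omega

lemma pos_of_ncard_inter_box_pos (hd : 0 < d) {S : Set (Pt d)} {x : Pt d} {L : ℕ}
    (h : 0 < (S ∩ box x L).ncard) : 0 < L := by
  obtain ⟨p, -, hp⟩ := Set.nonempty_of_ncard_ne_zero h.ne'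
  have := hp ⟨0, hd⟩
  omega

lemma mem_cell_coarse {L : ℕ} (hL : 0 < L) (p : Pt d) : p ∈ cell L (coarse L p) :=
  (mem_cell_iff hL).2 rfl

end Coarse

section Counting

open Classical

variable {d : ℕ}

def cellCount (L : ℕ) (A : Finset (Pt d)) (u : Pt d) : ℕ :=
  (A.filter fun p => coarse L p = u).card

lemma card_le_of_subset_lattice_inter_box {L m : ℕ} {z : Pt d} (hz : z ∈ lattice d L)
    {s : Finset (Pt d)} (hs : ↑s ⊆ lattice d L ∩ box z (L * m)) : s.card ≤ m ^ d := by
  have hsub : s ⊆ (Fintype.piFinset fun _ : Fin d => Finset.range m).image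
      fun k i => z i + L * (k i : ℤ) := by
    intro p hp
    obtain ⟨hpL, hpbox⟩ := hs hp
    choose c hc using fun i => dvd_sub (hpL i) (hz i)
    have hc_bounds : ∀ i, 0 ≤ c i ∧ c i < m := fun i => by
      have hbox := hpbox i
      have hci := hc i
      push_cast at hbox
      constructor <;> nlinarith
    refine Finset.mem_image.2 ⟨fun i => (c i).toNat, ?_, funext fun i => ?_⟩
    · simp only [Fintype.mem_piFinset, Finset.mem_range]
      intro i
      have := hc_bounds i
      omega
    · have hci := hc i
      simp only [Int.toNat_of_nonneg (hc_bounds i).1]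
      linarith
  calc s.card ≤ _ := Finset.card_le_card hsub
    _ ≤ _ := Finset.card_image_le
    _ = m ^ d := by simp

lemma cellCount_le {L0 m : ℕ} (hL : 0 < L0 * m) {s : Finset (Pt d)}
    (hs : ↑s ⊆ lattice d L0) (u : Pt d) : cellCount (L0 * m) s u ≤ m ^ d := by
  refine card_le_of_subset_lattice_inter_box (L := L0) (z := ((L0 * m : ℕ) : ℤ) • u)
    (fun i => ⟨m * u i, ?_⟩) fun p hp => ?_
  · simp only [Pi.smul_apply, smul_eq_mul]
    push_cast
    ring
  · rw [Finset.coe_filter] at hp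
    exact ⟨hs hp.1, (mem_cell_iff hL).2 hp.2⟩

lemma card_filter_window_add_le {L0 m : ℕ} (hL : 0 < L0 * m) {s : Finset (Pt d)}
    (hs : ↑s ⊆ lattice d L0) {u v : Pt d} (huv : v - u ∈ unitCube d) :
    (s.filter (· ∈ window (L0 * m) u)).card + m ^ d ≤
      cellCount (L0 * m) s v + 3 ^ d * m ^ d := by
  set t := (unitCube d).image (· + u)
  have hmaps : ∀ p ∈ s.filter (· ∈ window (L0 * m) u), coarse (L0 * m) p ∈ t := fun p hp =>
    Finset.mem_image.2 ⟨_, (mem_window_iff hL).1 (Finset.mem_filter.1 hp).2, sub_add_cancel _ _⟩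
  have hv : v ∈ t := Finset.mem_image.2 ⟨_, huv, sub_add_cancel _ _⟩
  have hfiber : ∀ w, ((s.filter (· ∈ window (L0 * m) u)).filter
      fun p => coarse (L0 * m) p = w).card ≤ m ^ d := fun w =>
    (Finset.card_le_card (Finset.filter_subset_filter _ (Finset.filter_subset _ _))).trans
      (cellCount_le hL hs w)
  have hfiber_v : ((s.filter (· ∈ window (L0 * m) u)).filter
      fun p => coarse (L0 * m) p = v).card ≤ cellCount (L0 * m) s v :=
    Finset.card_le_card (Finset.filter_subset_filter _ (Finset.filter_subset _ _))
  have hrest := Finset.sum_le_card_nsmul (t.erase v) _ (m ^ d) fun w _ => hfiber w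
  have hcard : ((t.erase v).card + 1) * m ^ d ≤ 3 ^ d * m ^ d := by
    rw [Finset.card_erase_add_one hv, ← card_unitCube]
    exact Nat.mul_le_mul_right _ Finset.card_image_le
  rw [Finset.card_eq_sum_card_fiberwise hmaps, ← Finset.add_sum_erase _ _ hv]
  rw [smul_eq_mul] at hrest
  linarith

lemma card_filter_mem_window_le {L : ℕ} (hL : 0 < L) (V : Finset (Pt d)) (p : Pt d) :
    (V.filter fun u => p ∈ window L u).card ≤ 3 ^ d := by
  rw [← card_unitCube]
  refine Finset.card_le_card_of_injOn (fun u => coarse L p - u) (fun u hu => ?_)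
    fun u _ w _ h => sub_right_injective h
  exact (mem_window_iff hL).1 (Finset.mem_filter.1 hu).2

lemma sum_card_filter_window_le {L : ℕ} (hL : 0 < L) (V : Finset (Pt d))
    (W : Finset (Pt d × Pt d)) :
    ∑ u ∈ V, (W.filter fun e => e.1 ∈ window L u).card ≤ 3 ^ d * W.card := by
  calc ∑ u ∈ V, (W.filter fun e => e.1 ∈ window L u).card
      = ∑ e ∈ W, (V.filter fun u => e.1 ∈ window L u).card := by
        simp only [Finset.card_filter]
        exact Finset.sum_comm
    _ ≤ ∑ _e ∈ W, 3 ^ d := Finset.sum_le_sum fun e _ => card_filter_mem_window_le hL V e.1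
    _ = 3 ^ d * W.card := by rw [Finset.sum_const, smul_eq_mul, mul_comm]

end Counting

section Lattice

variable {d : ℕ}

lemma natAbs_le_dist1 (x y : Pt d) (i : Fin d) : (x i - y i).natAbs ≤ dist1 x y :=
  Finset.single_le_sum (f := fun j => (x j - y j).natAbs) (fun _ _ => Nat.zero_le _)
    (Finset.mem_univ i)

lemma sub_mem_unitCube_of_adj {u v : Pt d} (h : adj u v) : v - u ∈ unitCube d := by
  simp only [unitCube, Fintype.mem_piFinset, Finset.mem_insert, Finset.mem_singleton,
    Pi.sub_apply]
  intro i
  have := natAbs_le_dist1 u v i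
  rw [show dist1 u v = 1 from h] at this
  omega

lemma exists_eq_update_of_adj {u v : Pt d} (h : adj u v) :
    ∃ i, ∃ b : Bool, v = Function.update u i (u i + if b then 1 else -1) := by
  have hsum : ∑ j, (u j - v j).natAbs = 1 := h
  obtain ⟨i, -, hi⟩ := Finset.exists_ne_zero_of_sum_ne_zero (hsum ▸ one_ne_zero)
  have hsplit := Finset.add_sum_erase Finset.univ (fun j => (u j - v j).natAbs) (Finset.mem_univ i)
  have hzero : ∑ j ∈ Finset.univ.erase i, (u j - v j).natAbs = 0 := by omega
  have hrest : ∀ j ≠ i, v j = u j := fun j hj => by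
    have := Finset.sum_eq_zero_iff.1 hzero j (Finset.mem_erase.2 ⟨hj, Finset.mem_univ j⟩)
    omega
  have hvi : (u i - v i).natAbs = 1 := by omega
  refine ⟨i, decide (v i = u i + 1), funext fun j => ?_⟩
  by_cases hj : j = i
  · subst hj
    by_cases hv : v j = u j + 1
    · simp [hv]
    · simp only [hv, decide_false, Bool.false_eq_true, ↓reduceIte, Function.update_self]
      omega
  · simp [hj, hrest j hj]

def nbrs (u : Pt d) : Finset (Pt d) :=
  Finset.univ.image fun ib : Fin d × Bool =>
    Function.update u ib.1 (u ib.1 + if ib.2 then 1 else -1)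

lemma card_nbrs_le (u : Pt d) : (nbrs u).card ≤ 2 * d :=
  Finset.card_image_le.trans (by simp [mul_comm])

lemma mem_nbrs_of_adj {u v : Pt d} (h : adj u v) : v ∈ nbrs u := by
  obtain ⟨i, b, rfl⟩ := exists_eq_update_of_adj h
  exact Finset.mem_image.2 ⟨(i, b), Finset.mem_univ _, rfl⟩

open Classical in
noncomputable def innerBoundary (F : Finset (Pt d)) : Finset (Pt d) :=
  F.filter fun u => ∃ v, adj u v ∧ v ∉ F

lemma ncard_edgeBd_le (F : Finset (Pt d)) :
    (edgeBd Set.univ (F : Set (Pt d))).ncard ≤ 2 * d * (innerBoundary F).card := by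
  have hsub : edgeBd Set.univ ↑F ⊆
      (((innerBoundary F).biUnion fun u => (nbrs u).image (Prod.mk u) : Finset (Pt d × Pt d)) :
        Set (Pt d × Pt d)) := by
    rintro ⟨u, v⟩ ⟨huv, hu, -, hv⟩
    simp only [Finset.coe_biUnion, Finset.coe_image, Set.mem_iUnion, Set.mem_image]
    refine ⟨u, ?_, v, mem_nbrs_of_adj huv, rfl⟩
    simp only [innerBoundary, Finset.coe_filter]
    exact ⟨hu, v, huv, hv⟩
  calc (edgeBd Set.univ (F : Set (Pt d))).ncard
      ≤ ((innerBoundary F).biUnion fun u => (nbrs u).image (Prod.mk u)).card := by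
        rw [← Set.ncard_coe_finset]
        exact Set.ncard_le_ncard hsub (Finset.finite_toSet _)
    _ ≤ ∑ u ∈ innerBoundary F, ((nbrs u).image (Prod.mk u)).card := Finset.card_biUnion_le
    _ ≤ ∑ _u ∈ innerBoundary F, 2 * d :=
        Finset.sum_le_sum fun u _ => Finset.card_image_le.trans (card_nbrs_le u)
    _ = 2 * d * (innerBoundary F).card := by rw [Finset.sum_const, smul_eq_mul, mul_comm]

lemma mem_ballZ_iff {x y : Pt d} {R : ℕ} : y ∈ ballZ x R ↔ ∀ i, (x i - y i).natAbs ≤ R :=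
  show distInf x y ≤ R ↔ _ by simp [distInf, Finset.sup_le_iff]

lemma ballZ_mono (x : Pt d) {r r' : ℕ} (h : r ≤ r') : ballZ x r ⊆ ballZ x r' :=
  fun _ hy => le_trans hy h

lemma ballZ_finite (x : Pt d) (R : ℕ) : (ballZ x R).Finite := by
  refine (Set.finite_Icc (x - fun _ => (R : ℤ)) (x + fun _ => (R : ℤ))).subset fun y hy => ?_
  have h := mem_ballZ_iff.1 hy
  exact ⟨fun i => show x i - R ≤ y i by have := h i; omega,
    fun i => show y i ≤ x i + R by have := h i; omega⟩

lemma smul_coarse_mem_ballZ {L n : ℕ} (hL : 0 < L) {p : Pt d} (hp : p ∈ ballZ 0 n) :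
    (L : ℤ) • coarse L p ∈ ballZ 0 (n + L) := by
  refine mem_ballZ_iff.2 fun i => ?_
  have hpi := mem_ballZ_iff.1 hp i
  have hcell := mem_cell_coarse hL p i
  simp only [Pi.smul_apply, smul_eq_mul, Pi.zero_apply, zero_sub, Int.natAbs_neg] at hcell hpi ⊢
  omega

end Lattice

section Arithmetic

lemma rpow_le_two_mul_pow_mul_rpow {d : ℕ} (hd : 1 ≤ d) {a m f : ℝ} (ha : 0 ≤ a) (hm : 0 ≤ m)
    (hf : 0 ≤ f) (h : a ≤ 2 * m ^ d * f) :
    a ^ (((d : ℝ) - 1) / d) ≤ 2 * m ^ (d - 1) * f ^ (((d : ℝ) - 1) / d) := by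
  set α := ((d : ℝ) - 1) / d with hα
  have hd' : (1 : ℝ) ≤ d := by exact_mod_cast hd
  have hα0 : 0 ≤ α := div_nonneg (by linarith) (by linarith)
  have hα1 : α ≤ 1 := (div_le_one (by linarith)).2 (by linarith)
  have hpow : (m ^ d) ^ α = m ^ (d - 1) := by
    rw [← Real.rpow_natCast, ← Real.rpow_mul hm, ← Real.rpow_natCast]
    congr 1
    rw [hα]
    push_cast [hd]
    field_simp
  calc a ^ α ≤ (2 * m ^ d * f) ^ α := Real.rpow_le_rpow ha h hα0
    _ = 2 ^ α * m ^ (d - 1) * f ^ α := by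
        rw [Real.mul_rpow (by positivity) hf, Real.mul_rpow (by positivity) (by positivity), hpow]
    _ ≤ 2 * m ^ (d - 1) * f ^ α := by
        gcongr
        simpa using Real.rpow_le_rpow_of_exponent_le one_le_two hα1

lemma one_div_fourteen_mul_rpow_le {d : ℕ} (hd : 1 ≤ d) {a M w : ℝ} (hM : 1 ≤ M)
    (ha : (7 : ℝ) ^ (-(d : ℝ)) * M ^ (2 * d ^ 2) ≤ a) (haw : a ≤ w * M ^ d) :
    1 / 14 * a ^ (((d : ℝ) - 1) / d) ≤ w := by
  set α := ((d : ℝ) - 1) / d with hα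
  have hM0 : 0 < M := one_pos.trans_le hM
  have ha0 : 0 < a := lt_of_lt_of_le (by positivity) ha
  have hw0 : 0 < w := pos_of_mul_pos_left (ha0.trans_le haw) (by positivity)
  have hpow : (M ^ d / 7) ^ d ≤ a := by
    calc (M ^ d / 7) ^ d = M ^ (d * d) / 7 ^ d := by rw [div_pow, pow_mul]
      _ ≤ M ^ (2 * d ^ 2) / 7 ^ d := by gcongr M ^ ?_ / _; nlinarith
      _ = (7 : ℝ) ^ (-(d : ℝ)) * M ^ (2 * d ^ 2) := by
          rw [Real.rpow_neg (by norm_num), Real.rpow_natCast]; ring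
      _ ≤ a := ha
  have hroot : M ^ d / 7 ≤ a ^ (d : ℝ)⁻¹ := by
    rw [← Real.pow_rpow_inv_natCast (n := d) (by positivity : 0 ≤ M ^ d / 7) (by omega)]
    exact Real.rpow_le_rpow (by positivity) hpow (by positivity)
  have hsplit : a ^ α * a ^ (d : ℝ)⁻¹ = a := by
    rw [← Real.rpow_add ha0, hα]
    convert Real.rpow_one a using 2
    field_simp
    ring
  have hmul : a ^ α * M ^ d ≤ 7 * w * M ^ d :=
    calc a ^ α * M ^ d ≤ a ^ α * (7 * a ^ (d : ℝ)⁻¹) := by gcongr; linarith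
      _ = 7 * (a ^ α * a ^ (d : ℝ)⁻¹) := by ring
      _ = 7 * a := by rw [hsplit]
      _ ≤ 7 * w * M ^ d := by linarith
  have : a ^ α ≤ 7 * w := le_of_mul_le_mul_right hmul (by positivity)
  linarith

lemma div_mul_rpow_le_of_chain {d : ℕ} (hd : 1 ≤ d) {c γ m a f v w : ℝ} (hc : 0 ≤ c)
    (hγ : 0 ≤ γ) (hm : 0 ≤ m) (ha : 0 ≤ a) (hf : 0 ≤ f) (haf : a ≤ 2 * m ^ d * f)
    (hfv : c * f ^ (((d : ℝ) - 1) / d) ≤ 2 * d * v) (hvw : v * (γ * m ^ (d - 1)) ≤ 3 ^ d * w) :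
    c * γ / (4 * d * 3 ^ d) * a ^ (((d : ℝ) - 1) / d) ≤ w := by
  calc c * γ / (4 * d * 3 ^ d) * a ^ (((d : ℝ) - 1) / d)
      ≤ c * γ / (4 * d * 3 ^ d) * (2 * m ^ (d - 1) * f ^ (((d : ℝ) - 1) / d)) := by
        gcongr
        exact rpow_le_two_mul_pow_mul_rpow hd ha hm hf haf
    _ = γ * m ^ (d - 1) / (2 * d * 3 ^ d) * (c * f ^ (((d : ℝ) - 1) / d)) := by
        field_simp
        ring
    _ ≤ γ * m ^ (d - 1) / (2 * d * 3 ^ d) * (2 * d * v) := by gcongr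
    _ = v * (γ * m ^ (d - 1)) / 3 ^ d := by
        field_simp
    _ ≤ w := by
        rw [div_le_iff₀ (by positivity)]
        linarith

end Arithmetic

section Boundary

variable {d : ℕ}

lemma bdWithin_finite {L : ℕ} {g A : Set (Pt d)} (hA : A.Finite) (hg : g.Finite) :
    (bdWithin L g A).Finite :=
  (hA.prod hg).subset fun _ he => ⟨he.2.1, he.2.2.1⟩

lemma bdWithin_inter_subset (L : ℕ) (g A B : Set (Pt d)) :
    bdWithin L (g ∩ B) (A ∩ B) ⊆ {e ∈ bdWithin L g A | e.1 ∈ B} :=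
  fun _ ⟨hL, ⟨hA, hB⟩, ⟨hg, hB'⟩, hnot⟩ => ⟨⟨hL, hA, hg, fun hA' => hnot ⟨hA', hB'⟩⟩, hB⟩

lemma exists_mem_bdWithin_of_isConnL {L : ℕ} {g A T : Set (Pt d)} (hT : IsConnL L T)
    (hTg : T ⊆ g) {p q : Pt d} (hp : p ∈ T) (hpA : p ∈ A) (hq : q ∈ T) (hqA : q ∉ A) :
    ∃ e ∈ bdWithin L g A, e.1 ∈ T := by
  obtain ⟨-, -, hpath⟩ := hT p hp q hq
  clear hq
  induction hpath with
  | refl => exact absurd hpA hqA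
  | @tail b c _ hstep ih =>
    by_cases hb : b ∈ A
    · exact ⟨(b, c), ⟨hstep.1, hb, hTg hstep.2.2, hqA⟩, hstep.2.1⟩
    · exact ih hb

lemma card_mul_le_ncard_of_le_ncard_window {L : ℕ} (hL : 0 < L) {B : Set (Pt d × Pt d)}
    (hB : B.Finite) (V : Finset (Pt d)) {γ : ℝ}
    (h : ∀ u ∈ V, γ ≤ {e ∈ B | e.1 ∈ window L u}.ncard) :
    V.card * γ ≤ 3 ^ d * B.ncard := by
  classical
  have hcount : ∀ u, {e ∈ B | e.1 ∈ window L u}.ncard =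
      (hB.toFinset.filter fun e => e.1 ∈ window L u).card := fun u => by
    rw [← Set.ncard_coe_finset, Finset.coe_filter]
    simp only [Set.Finite.mem_toFinset]
  calc V.card * γ ≤ ∑ u ∈ V, (({e ∈ B | e.1 ∈ window L u}.ncard : ℕ) : ℝ) :=
        (nsmul_eq_mul _ _).symm.trans_le (Finset.card_nsmul_le_sum _ _ _ h)
    _ ≤ 3 ^ d * B.ncard := by
        simp only [hcount, Set.ncard_eq_toFinset_card _ hB]
        exact_mod_cast sum_card_filter_window_le hL V hB.toFinset

end Boundary

section Cells

variable {d : ℕ}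

def denseCells (L0 m : ℕ) (A : Finset (Pt d)) : Finset (Pt d) :=
  (A.image (coarse (L0 * m))).filter fun u => m ^ d ≤ 2 * cellCount (L0 * m) A u

def sparseCells (L0 m : ℕ) (A : Finset (Pt d)) : Finset (Pt d) :=
  (A.image (coarse (L0 * m))).filter fun u => 2 * cellCount (L0 * m) A u < m ^ d

lemma ncard_inter_cell {L : ℕ} (hL : 0 < L) (A : Finset (Pt d)) (u : Pt d) :
    ((A : Set (Pt d)) ∩ cell L u).ncard = cellCount L A u := by
  rw [cellCount, ← Set.ncard_coe_finset, Finset.coe_filter]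
  congr 1
  ext p
  exact and_congr Iff.rfl (mem_cell_iff hL)

lemma two_mul_cellCount_lt_of_notMem_denseCells {L0 m : ℕ} (hm : 0 < m) {A : Finset (Pt d)}
    {v : Pt d} (hv : v ∉ denseCells L0 m A) : 2 * cellCount (L0 * m) A v < m ^ d := by
  by_cases hvA : v ∈ A.image (coarse (L0 * m))
  · simpa [denseCells, hvA] using hv
  · have : cellCount (L0 * m) A v = 0 := by
      rw [cellCount, Finset.card_eq_zero, Finset.filter_eq_empty_iff]
      exact fun p hp hpv => hvA (Finset.mem_image.2 ⟨p, hp, hpv⟩)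
    rw [this]
    positivity

lemma card_le_two_mul_sum_sparse_or_dense (L0 m : ℕ) (A : Finset (Pt d)) :
    A.card ≤ 2 * ∑ u ∈ sparseCells L0 m A, cellCount (L0 * m) A u ∨
      A.card ≤ 2 * ∑ u ∈ denseCells L0 m A, cellCount (L0 * m) A u := by
  have h := Finset.card_eq_sum_card_fiberwise
    (fun p hp => Finset.mem_image_of_mem (coarse (L0 * m)) hp : ∀ p ∈ A, _ ∈ A.image _)
  rw [← Finset.sum_filter_add_sum_filter_not _ (fun u => m ^ d ≤ 2 * cellCount (L0 * m) A u)]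
    at h
  simp only [not_le] at h
  rw [denseCells, sparseCells]
  simp only [cellCount] at h ⊢
  omega

lemma card_le_ncard_bdWithin_mul_of_sparse {L0 m : ℕ} (hL : 0 < L0 * m) {G : Set (Pt d)}
    (hGfin : G.Finite) {A : Finset (Pt d)} (hAG : ↑A ⊆ G)
    (hG : ∀ u ∈ A.image (coarse (L0 * m)),
      IsConnL L0 (G ∩ cell (L0 * m) u) ∧ (1 : ℝ) / 2 * m ^ d < (G ∩ cell (L0 * m) u).ncard)
    (hsparse : A.card ≤ 2 * ∑ u ∈ sparseCells L0 m A, cellCount (L0 * m) A u) :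
    A.card ≤ (bdWithin L0 G A).ncard * m ^ d := by
  have hbfin := bdWithin_finite (L := L0) A.finite_toSet hGfin
  have hcells : sparseCells L0 m A ⊆ hbfin.toFinset.image (coarse (L0 * m) ∘ Prod.fst) := by
    intro u hu
    obtain ⟨hu_img, hu_sparse⟩ := Finset.mem_filter.1 hu
    obtain ⟨hconn, hGu⟩ := hG u hu_img
    obtain ⟨p, hp, rfl⟩ := Finset.mem_image.1 hu_img
    have hlt : ((A : Set (Pt d)) ∩ cell (L0 * m) (coarse (L0 * m) p)).ncard <
        (G ∩ cell (L0 * m) (coarse (L0 * m) p)).ncard := by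
      rw [ncard_inter_cell hL]
      have : (2 * cellCount (L0 * m) A (coarse (L0 * m) p) : ℝ) < m ^ d := by
        exact_mod_cast hu_sparse
      have : (cellCount (L0 * m) A (coarse (L0 * m) p) : ℝ) <
          (G ∩ cell (L0 * m) (coarse (L0 * m) p)).ncard := by linarith
      exact_mod_cast this
    obtain ⟨q, hqG, hqA⟩ := Set.not_subset.1 fun hsub : G ∩ cell (L0 * m) _ ⊆ A =>
      hlt.not_ge (Set.ncard_le_ncard (fun x hx => ⟨hsub hx, hx.2⟩)
        (A.finite_toSet.subset Set.inter_subset_left))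
    obtain ⟨e, he, he_cell⟩ := exists_mem_bdWithin_of_isConnL hconn Set.inter_subset_left
      ⟨hAG hp, mem_cell_coarse hL p⟩ hp hqG hqA
    exact Finset.mem_image.2 ⟨e, hbfin.mem_toFinset.2 he, (mem_cell_iff hL).1 he_cell.2⟩
  calc A.card ≤ 2 * ∑ u ∈ sparseCells L0 m A, cellCount (L0 * m) A u := hsparse
    _ = ∑ u ∈ sparseCells L0 m A, 2 * cellCount (L0 * m) A u := Finset.mul_sum _ _ _
    _ ≤ ∑ _u ∈ sparseCells L0 m A, m ^ d :=
        Finset.sum_le_sum fun u hu => (Finset.mem_filter.1 hu).2.le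
    _ = (sparseCells L0 m A).card * m ^ d := by rw [Finset.sum_const, smul_eq_mul]
    _ ≤ (bdWithin L0 G A).ncard * m ^ d := by
        gcongr
        rw [Set.ncard_eq_toFinset_card _ hbfin]
        exact (Finset.card_le_card hcells).trans Finset.card_image_le

end Cells

section Dense

open Classical

variable {d : ℕ}

lemma card_le_two_mul_pow_mul_card_denseCells {L0 m : ℕ} (hL : 0 < L0 * m) {A : Finset (Pt d)}
    (hA : ↑A ⊆ lattice d L0)
    (hdense : A.card ≤ 2 * ∑ u ∈ denseCells L0 m A, cellCount (L0 * m) A u) :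
    A.card ≤ 2 * m ^ d * (denseCells L0 m A).card := by
  calc A.card ≤ 2 * ∑ u ∈ denseCells L0 m A, cellCount (L0 * m) A u := hdense
    _ ≤ 2 * ∑ _u ∈ denseCells L0 m A, m ^ d := by
        gcongr with u
        exact cellCount_le hL hA u
    _ = 2 * m ^ d * (denseCells L0 m A).card := by
        rw [Finset.sum_const, smul_eq_mul, mul_comm _ (m ^ d), mul_assoc]

lemma le_ncard_bdWithin_window {L0 m : ℕ} (hL : 0 < L0 * m) {G : Set (Pt d)}
    {A : Finset (Pt d)} (hAG : ↑A ⊆ G) (hA : ↑A ⊆ lattice d L0)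
    (hfin : (bdWithin L0 G A).Finite) {γ : ℝ} {u v : Pt d}
    (hu : m ^ d ≤ 2 * cellCount (L0 * m) A u) (hv : 2 * cellCount (L0 * m) A v < m ^ d)
    (huv : adj u v)
    (hloc : ∀ a ⊆ G ∩ window (L0 * m) u, (1 : ℝ) / 2 * m ^ d ≤ a.ncard →
      (a.ncard : ℝ) ≤ ((3 : ℝ) ^ d - 1 / 2) * m ^ d →
      γ ≤ (bdWithin L0 (G ∩ window (L0 * m) u) a).ncard) :
    γ ≤ {e ∈ bdWithin L0 G A | e.1 ∈ window (L0 * m) u}.ncard := by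
  set a : Set (Pt d) := ↑A ∩ window (L0 * m) u
  have ha_card : a.ncard = (A.filter (· ∈ window (L0 * m) u)).card := by
    rw [← Set.ncard_coe_finset, Finset.coe_filter]
    rfl
  have hcell_le : cellCount (L0 * m) A u ≤ a.ncard := by
    rw [ha_card, cellCount]
    refine Finset.card_le_card fun p hp => ?_
    rw [Finset.mem_filter] at hp ⊢
    exact ⟨hp.1, cell_subset_window _ _ ((mem_cell_iff hL).2 hp.2)⟩
  have hwindow := card_filter_window_add_le hL hA (sub_mem_unitCube_of_adj huv)
  rw [← ha_card] at hwindow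
  have hu' : (m : ℝ) ^ d ≤ 2 * cellCount (L0 * m) A u := by exact_mod_cast hu
  have hv' : 2 * (cellCount (L0 * m) A v : ℝ) < m ^ d := by exact_mod_cast hv
  have hcell_le' : (cellCount (L0 * m) A u : ℝ) ≤ a.ncard := by exact_mod_cast hcell_le
  have hwindow' : (a.ncard : ℝ) + m ^ d ≤ cellCount (L0 * m) A v + 3 ^ d * m ^ d := by
    exact_mod_cast hwindow
  refine (hloc a (Set.inter_subset_inter_left _ hAG) (by linarith) (by linarith)).trans ?_
  exact_mod_cast Set.ncard_le_ncard (bdWithin_inter_subset _ _ _ _) (hfin.subset fun e he => he.1)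

lemma le_ncard_bdWithin_of_dense {L0 m : ℕ} (hd : 1 ≤ d) (hL : 0 < L0 * m) {G : Set (Pt d)}
    (hGfin : G.Finite) {A : Finset (Pt d)} (hAne : A.Nonempty) (hAG : ↑A ⊆ G)
    (hA : ↑A ⊆ lattice d L0) {c γ : ℝ} (hc : 0 ≤ c) (hγ : 0 ≤ γ)
    (hiso : ∀ F : Set (Pt d), F.Finite → F.Nonempty →
      c * (F.ncard : ℝ) ^ (((d : ℝ) - 1) / d) ≤ (edgeBd Set.univ F).ncard)
    (hloc : ∀ u ∈ A.image (coarse (L0 * m)), ∀ a ⊆ G ∩ window (L0 * m) u,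
      (1 : ℝ) / 2 * m ^ d ≤ a.ncard → (a.ncard : ℝ) ≤ ((3 : ℝ) ^ d - 1 / 2) * m ^ d →
      γ * m ^ (d - 1) ≤ (bdWithin L0 (G ∩ window (L0 * m) u) a).ncard)
    (hdense : A.card ≤ 2 * ∑ u ∈ denseCells L0 m A, cellCount (L0 * m) A u) :
    c * γ / (4 * d * 3 ^ d) * (A.card : ℝ) ^ (((d : ℝ) - 1) / d) ≤ (bdWithin L0 G A).ncard := by
  set D := denseCells L0 m A
  have hbfin := bdWithin_finite (L := L0) A.finite_toSet hGfin
  have hDne : D.Nonempty := by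
    rw [Finset.nonempty_iff_ne_empty]
    rintro hD
    rw [hD, Finset.sum_empty] at hdense
    exact hAne.card_pos.ne' (by omega)
  have hisoD := hiso D D.finite_toSet (Finset.coe_nonempty.2 hDne)
  rw [Set.ncard_coe_finset] at hisoD
  have hedge : ((edgeBd Set.univ (D : Set (Pt d))).ncard : ℝ) ≤
      2 * d * (innerBoundary D).card := by exact_mod_cast ncard_edgeBd_le D
  have hlocal : ∀ u ∈ innerBoundary D,
      γ * m ^ (d - 1) ≤ {e ∈ bdWithin L0 G A | e.1 ∈ window (L0 * m) u}.ncard := by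
    intro u hu
    obtain ⟨huD, v, huv, hvD⟩ := Finset.mem_filter.1 hu
    obtain ⟨hu_img, hu_dense⟩ := Finset.mem_filter.1 huD
    exact le_ncard_bdWithin_window hL hAG hA hbfin hu_dense
      (two_mul_cellCount_lt_of_notMem_denseCells (Nat.pos_of_mul_pos_left hL) hvD) huv
      (hloc u hu_img)
  have hcount := card_mul_le_ncard_of_le_ncard_window hL hbfin _ hlocal
  have hAD : (A.card : ℝ) ≤ 2 * m ^ d * D.card := by
    exact_mod_cast card_le_two_mul_pow_mul_card_denseCells hL hA hdense
  exact div_mul_rpow_le_of_chain hd hc hγ (Nat.cast_nonneg _) (Nat.cast_nonneg _)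
    (Nat.cast_nonneg _) hAD (hisoD.trans hedge) hcount

theorem min_mul_rpow_le_ncard_bdWithin {L0 m : ℕ} (hd : 1 ≤ d) (hL : 0 < L0 * m)
    {G : Set (Pt d)} (hGfin : G.Finite) (hGL : G ⊆ lattice d L0) {A : Finset (Pt d)}
    (hAG : ↑A ⊆ G) {c γ : ℝ} (hc : 0 ≤ c) (hγ : 0 ≤ γ)
    (hiso : ∀ F : Set (Pt d), F.Finite → F.Nonempty →
      c * (F.ncard : ℝ) ^ (((d : ℝ) - 1) / d) ≤ (edgeBd Set.univ F).ncard)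
    (hG : ∀ u ∈ A.image (coarse (L0 * m)),
      IsConnL L0 (G ∩ cell (L0 * m) u) ∧ (1 : ℝ) / 2 * m ^ d < (G ∩ cell (L0 * m) u).ncard)
    (hloc : ∀ u ∈ A.image (coarse (L0 * m)), ∀ a ⊆ G ∩ window (L0 * m) u,
      (1 : ℝ) / 2 * m ^ d ≤ a.ncard → (a.ncard : ℝ) ≤ ((3 : ℝ) ^ d - 1 / 2) * m ^ d →
      γ * m ^ (d - 1) ≤ (bdWithin L0 (G ∩ window (L0 * m) u) a).ncard)
    (hA : (7 : ℝ) ^ (-(d : ℝ)) * m ^ (2 * d ^ 2) ≤ A.card) :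
    min (1 / 14) (c * γ / (4 * d * 3 ^ d)) * (A.card : ℝ) ^ (((d : ℝ) - 1) / d) ≤
      (bdWithin L0 G A).ncard := by
  have hm : 0 < m := Nat.pos_of_mul_pos_left hL
  rcases card_le_two_mul_sum_sparse_or_dense L0 m A with hsparse | hdense
  · refine (mul_le_mul_of_nonneg_right (min_le_left _ _) (by positivity)).trans ?_
    refine one_div_fourteen_mul_rpow_le hd (by exact_mod_cast hm) hA ?_
    exact_mod_cast card_le_ncard_bdWithin_mul_of_sparse hL hGfin hAG hG hsparse
  · have hAne : A.Nonempty :=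
      Finset.card_pos.1 (by exact_mod_cast (by positivity : (0 : ℝ) < _).trans_le hA)
    refine (mul_le_mul_of_nonneg_right (min_le_right _ _) (by positivity)).trans ?_
    exact le_ncard_bdWithin_of_dense hd hL hGfin hAne hAG (hAG.trans hGL) hc hγ hiso hloc hdense

end Dense

/-- Lemma 3.3, deterministic form. If `G ⊆ G_0 ∩ B(0,2R−L_s)` has dense and
connected restrictions to `L_s`-boxes and satisfies the local isoperimetric inequality of
Lemma 3.5 in `3L_s`-boxes, then every `A ⊆ G ∩ B(0,2R−4L_s)` with
`|A| ≥ 7^{−d}(L_s/L_0)^{2d²}` satisfies `|∂_G A| ≥ γ·|A|^{(d−1)/d}`, where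
`γ = min(1/14, c_*·γ₄/(4d·3^d))`. -/
theorem stmt10 (d : ℕ) (hd : 2 ≤ d) (L0 Ls R : ℕ) (hL0 : 0 < L0) (hdvd : L0 ∣ Ls)
    (hR : 5 * Ls ≤ R)
    (cstar : ℝ) (hcstar : 0 < cstar)
    -- `c_*` is an isoperimetric constant for `ℤ^d`
    (hisoZ : ∀ F : Set (Pt d), F.Finite → F.Nonempty →
      cstar * (F.ncard : ℝ) ^ (((d:ℝ) - 1)/d) ≤ (edgeBd Set.univ F).ncard)
    (G : Set (Pt d))
    (hGsub : G ⊆ lattice d L0 ∩ ballZ (0 : Pt d) (2*R - Ls))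
    -- (i) density and connectivity in `L_s`-boxes
    (hGdens : ∀ x ∈ lattice d Ls ∩ ballZ (0 : Pt d) (2*R - 2*Ls),
      IsConnL L0 (G ∩ box x Ls) ∧
      ((1:ℝ)/2) * ((Ls : ℝ)/(L0 : ℝ)) ^ d < ((G ∩ box x Ls).ncard : ℝ))
    -- (ii) the local isoperimetric inequality in `3L_s`-boxes
    (γ₄ : ℝ) (hγ₄ : 0 < γ₄)
    (hloc : ∀ x ∈ lattice d Ls ∩ ballZ (0 : Pt d) (2*R - 3*Ls),
      ∀ A : Set (Pt d), A ⊆ G ∩ boxI x (-(Ls:ℤ)) (2*Ls) →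
        ((1:ℝ)/2) * ((Ls : ℝ)/(L0 : ℝ)) ^ d ≤ (A.ncard : ℝ) →
        (A.ncard : ℝ) ≤ ((3:ℝ)^d - 1/2) * ((Ls : ℝ)/(L0 : ℝ)) ^ d →
        γ₄ * ((Ls : ℝ)/(L0 : ℝ)) ^ (d-1) ≤
          ((bdWithin L0 (G ∩ boxI x (-(Ls:ℤ)) (2*Ls)) A).ncard : ℝ)) :
    ∀ A : Set (Pt d), A ⊆ G ∩ ballZ (0 : Pt d) (2*R - 4*Ls) →
      (7:ℝ)^(-(d:ℝ)) * ((Ls : ℝ)/(L0 : ℝ)) ^ (2*d^2) ≤ (A.ncard : ℝ) →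
      min ((1:ℝ)/14) (cstar * γ₄ / (4*(d:ℝ)*3^d)) * (A.ncard : ℝ) ^ (((d:ℝ) - 1)/d) ≤
        ((bdWithin L0 G A).ncard : ℝ) := by
  intro A hAsub hAbig
  obtain ⟨m, rfl⟩ := hdvd
  have hratio : ((L0 * m : ℕ) : ℝ) / L0 = m := by
    push_cast
    field_simp
  simp only [hratio] at hGdens hloc hAbig
  have hL : 0 < L0 * m := by
    have h0 := (hGdens 0 ⟨fun _ => dvd_zero _, mem_ballZ_iff.2 fun _ => by simp⟩).2
    exact pos_of_ncard_inter_box_pos (by omega)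
      (Nat.cast_pos.1 ((by positivity : (0 : ℝ) ≤ _).trans_lt h0))
  have hGfin : G.Finite := (ballZ_finite 0 _).subset fun p hp => (hGsub hp).2
  obtain ⟨s, rfl⟩ := (hGfin.subset fun p hp => (hAsub hp).1).exists_finset_coe
  have hsG : (s : Set (Pt d)) ⊆ G := fun p hp => (hAsub hp).1
  have hcells : ∀ u ∈ s.image (coarse (L0 * m)),
      ((L0 * m : ℕ) : ℤ) • u ∈ lattice d (L0 * m) ∩ ballZ 0 (2 * R - 3 * (L0 * m)) := by
    intro u hu
    obtain ⟨p, hp, rfl⟩ := Finset.mem_image.1 hu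
    have := smul_coarse_mem_ballZ hL (hAsub hp).2
    rw [show 2 * R - 4 * (L0 * m) + L0 * m = 2 * R - 3 * (L0 * m) by omega] at this
    exact ⟨smul_mem_lattice _ _, this⟩
  rw [Set.ncard_coe_finset] at hAbig ⊢
  exact min_mul_rpow_le_ncard_bdWithin (by omega) hL hGfin (fun p hp => (hGsub hp).1) hsG hcstar.le
    hγ₄.le hisoZ (fun u hu => hGdens _ ⟨(hcells u hu).1, ballZ_mono _ (by omega) (hcells u hu).2⟩)
    (fun u hu => hloc _ (hcells u hu)) hAbig

end Perco
end
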